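/- Let W ⊆ ℝ^m × ℝ^d be a convex set and let s : W → ℝ^{d×(n+1)} be a map all of whose component functions s_{i,j} are convex on W, with s(W) ⊆ Q and s_{i,n}(x,f) = f_i for all (x,f) ∈ W. Assume φ : ℝ^d → ℝ is supermodular on [f^L,f^U] := Π_i [a_{i,0}, a_{i,n}], is convex in each argument when the other arguments are held fixed in [f^L,f^U], and φ̄ is concave-extendable from vert(Q) = Π_{i=1}^d {v_{i,0},…,v_{i,n}}; assume moreover that each function (x,f) ↦ B_i^ω(φ)(s_i(x,f);a) is bounded above on W for every direction vector ω and every i. Define R := { (x,f,μ) : (x,f) ∈ W and there exists s̃ ∈ ℝ^{d×(n+1)} with s(x,f) ≤ s̃ componentwise and μ ≤ min_{ω∈Ω} B̂^ω(φ)(s̃;a) } and R_+ := { (x,f,μ) : (x,f) ∈ W and μ ≤ min_{ω∈Ω} [ φ(Π(a;p^0)) + Σ_{i=1}^d conc_W((x,f) ↦ B_i^ω(φ)(s_i(x,f);a))(x,f) ] }. Then R and R_+ are convex sets and { (x,f,μ) : μ ≤ φ(f), (x,f) ∈ W } ⊆ R_+ ⊆ R. -/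

import Mathlib

open Finset

noncomputable section

/-- A direction vector: each value `i ∈ {1,…,d}` occurs exactly `n` times. -/
def IsDirVec (d n : ℕ) (ω : Fin (d * n) → Fin d) : Prop :=
  ∀ i : Fin d, (Finset.univ.filter (fun t => ω t = i)).card = n

/-- The grid point reached after the first `t` moves of the staircase determined by `ω`. -/
def gridPt (d n : ℕ) (ω : Fin (d * n) → Fin d) (t : ℕ) (i : Fin d) : ℕ :=
  (Finset.univ.filter (fun t' : Fin (d * n) => (t' : ℕ) < t ∧ ω t' = i)).card

/-- Coercion of a natural number `k ≤ n` into `Fin (n+1)`. -/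
def toIdx (n k : ℕ) : Fin (n + 1) := ⟨min k n, Nat.lt_succ_of_le (Nat.min_le_right k n)⟩

/-- The vertex `v_{i,j}` of the simplex `Q_i` : its `k`-th entry is `a_{i,min(j,k)}`. -/
def vvec (d n : ℕ) (a : Fin d → Fin (n + 1) → ℝ) (i : Fin d) (j : Fin (n + 1)) :
    Fin (n + 1) → ℝ :=
  fun k => a i (min j k)

/-- The simplotope `Q = Q_1 × ⋯ × Q_d`. -/
def Qset (d n : ℕ) (a : Fin d → Fin (n + 1) → ℝ) : Set (Fin d → Fin (n + 1) → ℝ) :=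
  {s | ∀ i, s i ∈ convexHull ℝ {w | ∃ j, w = vvec d n a i j}}

/-- The vertex set of `Q`. -/
def vertQ (d n : ℕ) (a : Fin d → Fin (n + 1) → ℝ) : Set (Fin d → Fin (n + 1) → ℝ) :=
  {s | ∀ i, ∃ j, s i = vvec d n a i j}

/-- `φ̄(s) = φ(s_{1,n},…,s_{d,n})`. -/
def phibar (d n : ℕ) (φ : (Fin d → ℝ) → ℝ) : (Fin d → Fin (n + 1) → ℝ) → ℝ :=
  fun s => φ (fun i => s i (Fin.last n))

/-- The concave envelope of `g` over `S`, evaluated at `x`. -/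
def concEnv {E : Type*} [AddCommMonoid E] [Module ℝ E] (S : Set E) (g : E → ℝ) (x : E) : ℝ :=
  sSup {r : ℝ | ∃ (k : ℕ) (lam : Fin k → ℝ) (y : Fin k → E),
    (∀ idx, 0 ≤ lam idx) ∧ ∑ idx, lam idx = 1 ∧ (∀ idx, y idx ∈ S) ∧
    ∑ idx, lam idx • y idx = x ∧ r = ∑ idx, lam idx * g (y idx)}

/-- The `i`-th separable piece `B_i^ω(φ)(s_i; a)` (matrix version). -/
def BiM (d n : ℕ) (φ : (Fin d → ℝ) → ℝ) (ω : Fin (d * n) → Fin d) (i : Fin d)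
    (si : Fin (n + 1) → ℝ) (a : Fin d → Fin (n + 1) → ℝ) : ℝ :=
  ∑ t ∈ Finset.univ.filter (fun t : Fin (d * n) => ω t = i),
    (φ (fun k => if k = i then si (toIdx n (gridPt d n ω ((t : ℕ) + 1) k))
          else a k (toIdx n (gridPt d n ω ((t : ℕ) + 1) k))) -
      φ (fun k => if k = i then si (toIdx n (gridPt d n ω (t : ℕ) k))
          else a k (toIdx n (gridPt d n ω (t : ℕ) k))))

/-- The affine interpolant `B̂^ω(φ)(s;a)`. -/
def Bhat (d n : ℕ) (φ : (Fin d → ℝ) → ℝ) (ω : Fin (d * n) → Fin d)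
    (a s : Fin d → Fin (n + 1) → ℝ) : ℝ :=
  φ (fun i => a i (toIdx n (gridPt d n ω 0 i))) +
    ∑ t : Fin (d * n),
      ((φ (fun i => a i (toIdx n (gridPt d n ω ((t : ℕ) + 1) i))) -
          φ (fun i => a i (toIdx n (gridPt d n ω (t : ℕ) i)))) /
          (a (ω t) (toIdx n (gridPt d n ω ((t : ℕ) + 1) (ω t))) -
            a (ω t) (toIdx n (gridPt d n ω (t : ℕ) (ω t))))) *
        (s (ω t) (toIdx n (gridPt d n ω ((t : ℕ) + 1) (ω t))) -
          s (ω t) (toIdx n (gridPt d n ω (t : ℕ) (ω t))))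

lemma toIdx_val {n k : ℕ} (h : k ≤ n) : ((toIdx n k) : ℕ) = k := min_eq_left h

lemma toIdx_zero (n : ℕ) : toIdx n 0 = 0 := by
  apply Fin.ext; simp [toIdx]

lemma toIdx_last (n : ℕ) : toIdx n n = Fin.last n := by
  apply Fin.ext; simp [toIdx, Fin.last]

lemma toIdx_mono {n k k' : ℕ} (h : k ≤ k') : toIdx n k ≤ toIdx n k' := by
  simp only [toIdx, Fin.mk_le_mk]
  exact min_le_min_right _ h

lemma toIdx_lt {n k k' : ℕ} (h : k < k') (h' : k' ≤ n) : toIdx n k < toIdx n k' := by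
  simp only [toIdx, Fin.mk_lt_mk]
  rw [min_eq_left h', min_eq_left (le_trans (Nat.le_of_lt h) h')]
  exact h

lemma gridPt_zero (d n : ℕ) (ω : Fin (d * n) → Fin d) (i : Fin d) : gridPt d n ω 0 i = 0 := by
  simp [gridPt]

lemma gridPt_mono (d n : ℕ) (ω : Fin (d * n) → Fin d) (i : Fin d) {t t' : ℕ} (h : t ≤ t') :
    gridPt d n ω t i ≤ gridPt d n ω t' i := by
  apply Finset.card_le_card
  apply Finset.monotone_filter_right
  intro x _ hx
  exact ⟨lt_of_lt_of_le hx.1 h, hx.2⟩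

lemma gridPt_le (d n : ℕ) (ω : Fin (d * n) → Fin d) (hω : IsDirVec d n ω) (t : ℕ) (i : Fin d) :
    gridPt d n ω t i ≤ n := by
  refine le_trans ?_ (le_of_eq (hω i))
  apply Finset.card_le_card
  apply Finset.monotone_filter_right
  intro x _ hx
  exact hx.2

lemma gridPt_total (d n : ℕ) (ω : Fin (d * n) → Fin d) (hω : IsDirVec d n ω) (i : Fin d) :
    gridPt d n ω (d * n) i = n := by
  refine Eq.trans ?_ (hω i)
  unfold gridPt
  congr 1
  apply Finset.filter_congr
  intro t _
  simp [t.isLt]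

lemma gridPt_succ (d n : ℕ) (ω : Fin (d * n) → Fin d) (t : Fin (d * n)) (i : Fin d) :
    gridPt d n ω ((t : ℕ) + 1) i = gridPt d n ω (t : ℕ) i + if ω t = i then 1 else 0 := by
  unfold gridPt
  have h : (Finset.univ.filter (fun t' : Fin (d * n) => (t' : ℕ) < (t : ℕ) + 1 ∧ ω t' = i)) =
      (Finset.univ.filter (fun t' : Fin (d * n) => ((t' : ℕ) < (t : ℕ) ∧ ω t' = i))) ∪
        (Finset.univ.filter (fun t' : Fin (d * n) => t' = t ∧ ω t = i)) := by
    rw [← Finset.filter_or]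
    apply Finset.filter_congr
    intro t' _
    constructor
    · rintro ⟨hlt, he⟩
      rcases Nat.lt_succ_iff_lt_or_eq.mp hlt with h' | h'
      · exact Or.inl ⟨h', he⟩
      · have : t' = t := Fin.ext h'
        subst this; exact Or.inr ⟨rfl, he⟩
    · rintro (⟨hlt, he⟩ | ⟨rfl, he⟩)
      · exact ⟨Nat.lt_succ_of_lt hlt, he⟩
      · exact ⟨Nat.lt_succ_self _, he⟩
  rw [h, Finset.card_union_of_disjoint]
  · congr 1
    by_cases he : ω t = i
    · rw [if_pos he]
      have : (Finset.univ.filter (fun t' : Fin (d * n) => t' = t ∧ ω t = i)) = {t} := by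
        ext t'; simp [he]
      rw [this, Finset.card_singleton]
    · rw [if_neg he]
      have : (Finset.univ.filter (fun t' : Fin (d * n) => t' = t ∧ ω t = i)) = ∅ := by
        ext t'; simp [he]
      rw [this, Finset.card_empty]
  · rw [Finset.disjoint_left]
    intro x hx hx'
    simp only [Finset.mem_filter] at hx hx'
    rcases hx' with ⟨_, rfl, _⟩
    exact lt_irrefl _ hx.2.1

lemma gridPt_succ_self (d n : ℕ) (ω : Fin (d * n) → Fin d) (t : Fin (d * n)) :
    gridPt d n ω ((t : ℕ) + 1) (ω t) = gridPt d n ω (t : ℕ) (ω t) + 1 := by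
  rw [gridPt_succ]; simp

lemma gridPt_succ_ne (d n : ℕ) (ω : Fin (d * n) → Fin d) (t : Fin (d * n)) {k : Fin d}
    (hk : ¬ (ω t = k)) : gridPt d n ω ((t : ℕ) + 1) k = gridPt d n ω (t : ℕ) k := by
  rw [gridPt_succ]; simp [hk]

lemma gridPt_lt (d n : ℕ) (ω : Fin (d * n) → Fin d) (hω : IsDirVec d n ω) (t : Fin (d * n)) :
    gridPt d n ω (t : ℕ) (ω t) < n := by
  have h1 := gridPt_succ_self d n ω t
  have h2 := gridPt_le d n ω hω ((t : ℕ) + 1) (ω t)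
  omega

lemma aux_Q_facts (d n : ℕ) (a : Fin d → Fin (n + 1) → ℝ) (ha : ∀ i, StrictMono (a i))
    (i : Fin d) (u : Fin (n + 1) → ℝ)
    (hu : u ∈ convexHull ℝ {w | ∃ j, w = vvec d n a i j}) :
    u 0 = a i 0 ∧ Monotone u ∧ (∀ j, u j ≤ a i j) := by
  have hsub : convexHull ℝ {w | ∃ j, w = vvec d n a i j} ⊆
      {u : Fin (n + 1) → ℝ | u 0 = a i 0 ∧ Monotone u ∧ ∀ j, u j ≤ a i j} := by
    apply convexHull_min
    · rintro w ⟨j, rfl⟩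
      refine ⟨?_, ?_, ?_⟩
      · show a i (min j 0) = a i 0
        congr 1
        exact min_eq_right (Fin.zero_le _)
      · intro k k' hk
        exact (ha i).monotone (min_le_min le_rfl hk)
      · intro k
        exact (ha i).monotone (min_le_right _ _)
    · rintro x ⟨hx0, hxm, hxa⟩ y ⟨hy0, hym, hya⟩ lam mu hlam hmu hsum
      refine ⟨?_, ?_, ?_⟩
      · show lam • x 0 + mu • y 0 = a i 0
        simp only [smul_eq_mul]
        rw [hx0, hy0, ← add_mul, hsum, one_mul]
      · intro k k' hk
        have h1 : lam * x k ≤ lam * x k' := mul_le_mul_of_nonneg_left (hxm hk) hlam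
        have h2 : mu * y k ≤ mu * y k' := mul_le_mul_of_nonneg_left (hym hk) hmu
        show lam • x k + mu • y k ≤ lam • x k' + mu • y k'
        simp only [smul_eq_mul]
        linarith
      · intro j
        show lam • x j + mu • y j ≤ a i j
        simp only [smul_eq_mul]
        have h1 : lam * x j ≤ lam * a i j := mul_le_mul_of_nonneg_left (hxa j) hlam
        have h2 : mu * y j ≤ mu * a i j := mul_le_mul_of_nonneg_left (hya j) hmu
        have h3 : lam * a i j + mu * a i j = a i j := by rw [← add_mul, hsum, one_mul]
        linarith
  exact hsub hu

lemma aux_Q_box (d n : ℕ) (a : Fin d → Fin (n + 1) → ℝ) (ha : ∀ i, StrictMono (a i))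
    (i : Fin d) (u : Fin (n + 1) → ℝ)
    (hu0 : u 0 = a i 0) (hum : Monotone u) (hua : ∀ j, u j ≤ a i j) (j : Fin (n + 1)) :
    u j ∈ Set.Icc (a i 0) (a i (Fin.last n)) := by
  constructor
  · rw [← hu0]; exact hum (Fin.zero_le _)
  · exact le_trans (hua j) ((ha i).monotone (Fin.le_last _))

lemma aux_superdiff (d n : ℕ) (a : Fin d → Fin (n + 1) → ℝ) (φ : (Fin d → ℝ) → ℝ)
    (hsuper : ∀ y ∈ Set.Icc (fun i => a i 0) (fun i => a i (Fin.last n)),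
      ∀ z ∈ Set.Icc (fun i => a i 0) (fun i => a i (Fin.last n)),
        φ y + φ z ≤ φ (y ⊔ z) + φ (y ⊓ z))
    (i : Fin d) (p q : Fin d → ℝ)
    (hp : ∀ k, p k ∈ Set.Icc (a k 0) (a k (Fin.last n)))
    (hq : ∀ k, q k ∈ Set.Icc (a k 0) (a k (Fin.last n)))
    (hpq : ∀ k, p k ≤ q k)
    (u v : ℝ) (hu : u ∈ Set.Icc (a i 0) (a i (Fin.last n)))
    (hv : v ∈ Set.Icc (a i 0) (a i (Fin.last n))) (huv : u ≤ v) :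
    φ (Function.update p i v) - φ (Function.update p i u) ≤
      φ (Function.update q i v) - φ (Function.update q i u) := by
  have hmem : ∀ (w : Fin d → ℝ), (∀ k, w k ∈ Set.Icc (a k 0) (a k (Fin.last n))) →
      ∀ (x : ℝ), x ∈ Set.Icc (a i 0) (a i (Fin.last n)) →
      Function.update w i x ∈ Set.Icc (fun i' => a i' 0) (fun i' => a i' (Fin.last n)) := by
    intro w hw x hx
    constructor
    · intro k
      rcases eq_or_ne k i with rfl | hk
      · simpa using hx.1
      · simp only [Function.update_apply, if_neg hk]
        exact (hw k).1
    · intro k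
      rcases eq_or_ne k i with rfl | hk
      · simpa using hx.2
      · simp only [Function.update_apply, if_neg hk]
        exact (hw k).2
  have key := hsuper (Function.update q i u) (hmem q hq u hu) (Function.update p i v) (hmem p hp v hv)
  have hsup : Function.update q i u ⊔ Function.update p i v = Function.update q i v := by
    funext k
    simp only [Pi.sup_apply, Function.update_apply]
    rcases eq_or_ne k i with rfl | hk
    · simp [max_eq_right huv]
    · simp [if_neg hk, max_eq_left (hpq k)]
  have hinf : Function.update q i u ⊓ Function.update p i v = Function.update p i u := by
    funext k
    simp only [Pi.inf_apply, Function.update_apply]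
    rcases eq_or_ne k i with rfl | hk
    · simp [min_eq_left huv]
    · simp [if_neg hk, min_eq_right (hpq k)]
  rw [hsup, hinf] at key
  linarith

lemma aux_secant {f : ℝ → ℝ} {S : Set ℝ} (hf : ConvexOn ℝ S f)
    {u v x y : ℝ} (hu : u ∈ S) (hv : v ∈ S) (hx : x ∈ S) (hy : y ∈ S)
    (huv : u ≤ v) (hux : u ≤ x) (hvy : v ≤ y) (hxy : x < y) :
    f v - f u ≤ (f y - f x) / (y - x) * (v - u) := by
  rcases eq_or_lt_of_le huv with rfl | huv
  · simp
  have huy : u < y := lt_of_le_of_lt hux hxy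
  have h1 : (f v - f u) / (v - u) ≤ (f y - f u) / (y - u) :=
    hf.secant_mono hu hv hy (ne_of_gt huv) (ne_of_gt huy) hvy
  have h2 : (f u - f y) / (u - y) ≤ (f x - f y) / (x - y) :=
    hf.secant_mono hy hu hx (ne_of_lt huy) (ne_of_lt hxy) hux
  have h2' : (f y - f u) / (y - u) = (f u - f y) / (u - y) := by
    rw [← neg_div_neg_eq]; ring_nf
  have h3 : (f x - f y) / (x - y) = (f y - f x) / (y - x) := by
    rw [← neg_div_neg_eq]; ring_nf
  have hfinal : (f v - f u) / (v - u) ≤ (f y - f x) / (y - x) := by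
    calc (f v - f u) / (v - u) ≤ (f y - f u) / (y - u) := h1
    _ = (f u - f y) / (u - y) := h2'
    _ ≤ (f x - f y) / (x - y) := h2
    _ = (f y - f x) / (y - x) := h3
  have := mul_le_mul_of_nonneg_right hfinal (by linarith : (0:ℝ) ≤ v - u)
  rwa [div_mul_cancel₀] at this
  exact ne_of_gt (by linarith)

section concEnvLemmas
variable {E : Type*} [AddCommMonoid E] [Module ℝ E] (S : Set E) (g : E → ℝ)

def repSet (x : E) : Set ℝ := {r : ℝ | ∃ (k : ℕ) (lam : Fin k → ℝ) (y : Fin k → E),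
    (∀ idx, 0 ≤ lam idx) ∧ ∑ idx, lam idx = 1 ∧ (∀ idx, y idx ∈ S) ∧
    ∑ idx, lam idx • y idx = x ∧ r = ∑ idx, lam idx * g (y idx)}

lemma concEnv_eq (x : E) : concEnv S g x = sSup (repSet S g x) := rfl

lemma repSet_mem_self {x : E} (hx : x ∈ S) : g x ∈ repSet S g x := by
  refine ⟨1, fun _ => 1, fun _ => x, fun _ => zero_le_one, by simp, fun _ => hx, by simp, by simp⟩

lemma repSet_bound {C : ℝ} (hC : ∀ z ∈ S, g z ≤ C) {x : E} {r : ℝ} (hr : r ∈ repSet S g x) :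
    r ≤ C := by
  obtain ⟨k, lam, y, h0, h1, hS, _, rfl⟩ := hr
  calc ∑ idx, lam idx * g (y idx) ≤ ∑ idx, lam idx * C := by
        apply Finset.sum_le_sum
        intro idx _
        exact mul_le_mul_of_nonneg_left (hC _ (hS idx)) (h0 idx)
  _ = C := by rw [← Finset.sum_mul, h1, one_mul]

lemma repSet_bddAbove {C : ℝ} (hC : ∀ z ∈ S, g z ≤ C) (x : E) : BddAbove (repSet S g x) :=
  ⟨C, fun _ hr => repSet_bound S g hC hr⟩

lemma self_le_concEnv {C : ℝ} (hC : ∀ z ∈ S, g z ≤ C) {x : E} (hx : x ∈ S) :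
    g x ≤ concEnv S g x :=
  le_csSup (repSet_bddAbove S g hC x) (repSet_mem_self S g hx)

lemma concEnv_le {x : E} (hx : x ∈ S) {M : ℝ}
    (hM : ∀ r ∈ repSet S g x, r ≤ M) : concEnv S g x ≤ M :=
  csSup_le ⟨g x, repSet_mem_self S g hx⟩ hM

lemma repSet_combo {x y : E} {lam mu : ℝ} (hlam : 0 ≤ lam) (hmu : 0 ≤ mu) (hsum : lam + mu = 1)
    {r1 r2 : ℝ} (h1 : r1 ∈ repSet S g x) (h2 : r2 ∈ repSet S g y) :
    lam * r1 + mu * r2 ∈ repSet S g (lam • x + mu • y) := by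
  obtain ⟨k1, lam1, y1, h10, h11, h1S, h1x, rfl⟩ := h1
  obtain ⟨k2, lam2, y2, h20, h21, h2S, h2x, rfl⟩ := h2
  refine ⟨k1 + k2, Fin.append (fun i => lam * lam1 i) (fun i => mu * lam2 i),
    Fin.append y1 y2, ?_, ?_, ?_, ?_, ?_⟩
  · intro idx
    refine Fin.addCases (fun i => ?_) (fun i => ?_) idx
    · rw [Fin.append_left]; exact mul_nonneg hlam (h10 i)
    · rw [Fin.append_right]; exact mul_nonneg hmu (h20 i)
  · rw [Fin.sum_univ_add]
    simp only [Fin.append_left, Fin.append_right]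
    rw [← Finset.mul_sum, ← Finset.mul_sum, h11, h21, mul_one, mul_one, hsum]
  · intro idx
    refine Fin.addCases (fun i => ?_) (fun i => ?_) idx
    · rw [Fin.append_left]; exact h1S i
    · rw [Fin.append_right]; exact h2S i
  · rw [Fin.sum_univ_add]
    simp only [Fin.append_left, Fin.append_right]
    rw [← h1x, ← h2x, Finset.smul_sum, Finset.smul_sum]
    congr 1 <;> · apply Finset.sum_congr rfl; intro i _; rw [smul_smul]
  · rw [Fin.sum_univ_add]
    simp only [Fin.append_left, Fin.append_right]
    rw [Finset.mul_sum, Finset.mul_sum]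
    congr 1 <;> · apply Finset.sum_congr rfl; intro i _; ring

lemma concEnv_superadd {C : ℝ} (hC : ∀ z ∈ S, g z ≤ C) {x y : E} (hx : x ∈ S) (hy : y ∈ S)
    {lam mu : ℝ} (hlam : 0 ≤ lam) (hmu : 0 ≤ mu) (hsum : lam + mu = 1) :
    lam * concEnv S g x + mu * concEnv S g y ≤ concEnv S g (lam • x + mu • y) := by
  simp only [concEnv_eq]
  have hAne : (repSet S g x).Nonempty := ⟨g x, repSet_mem_self S g hx⟩
  have hBne : (repSet S g y).Nonempty := ⟨g y, repSet_mem_self S g hy⟩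
  have hCbdd := repSet_bddAbove S g hC (lam • x + mu • y)
  have step1 : ∀ r2 ∈ repSet S g y,
      lam * sSup (repSet S g x) + mu * r2 ≤ sSup (repSet S g (lam • x + mu • y)) := by
    intro r2 hr2
    rcases eq_or_lt_of_le hlam with heq | hpos
    · obtain ⟨r1, hr1⟩ := hAne
      have := le_csSup hCbdd (repSet_combo S g hlam hmu hsum hr1 hr2)
      rw [← heq] at this ⊢
      simpa using this
    · have hall : ∀ r1 ∈ repSet S g x,
          r1 ≤ (sSup (repSet S g (lam • x + mu • y)) - mu * r2) / lam := by
        intro r1 hr1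
        have := le_csSup hCbdd (repSet_combo S g hlam hmu hsum hr1 hr2)
        rw [le_div_iff₀ hpos]
        linarith
      have h := csSup_le hAne hall
      rw [le_div_iff₀ hpos] at h
      linarith [h]
  rcases eq_or_lt_of_le hmu with heq | hpos
  · obtain ⟨r2, hr2⟩ := hBne
    have := step1 r2 hr2
    rw [← heq] at this ⊢
    simpa using this
  · have hall : ∀ r2 ∈ repSet S g y,
        r2 ≤ (sSup (repSet S g (lam • x + mu • y)) - lam * sSup (repSet S g x)) / mu := by
      intro r2 hr2
      have := step1 r2 hr2
      rw [le_div_iff₀ hpos]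
      linarith
    have h := csSup_le hBne hall
    rw [le_div_iff₀ hpos] at h
    linarith [h]

end concEnvLemmas

lemma aux_pointwise (d n : ℕ) (a : Fin d → Fin (n + 1) → ℝ) (ha : ∀ i, StrictMono (a i))
    (φ : (Fin d → ℝ) → ℝ)
    (hsuper : ∀ y ∈ Set.Icc (fun i => a i 0) (fun i => a i (Fin.last n)),
      ∀ z ∈ Set.Icc (fun i => a i 0) (fun i => a i (Fin.last n)),
        φ y + φ z ≤ φ (y ⊔ z) + φ (y ⊓ z))
    (ω : Fin (d * n) → Fin d) (hω : IsDirVec d n ω)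
    (u : Fin d → Fin (n + 1) → ℝ)
    (hu0 : ∀ i, u i 0 = a i 0) (hum : ∀ i, Monotone (u i)) (hua : ∀ i j, u i j ≤ a i j) :
    φ (fun i => u i (Fin.last n)) ≤ φ (fun i => a i 0) + ∑ i, BiM d n φ ω i (u i) a := by
  have box : ∀ k (j : Fin (n + 1)), u k j ∈ Set.Icc (a k 0) (a k (Fin.last n)) :=
    fun k j => aux_Q_box d n a ha k (u k) (hu0 k) (hum k) (hua k) j
  have boxa : ∀ k (j : Fin (n + 1)), a k j ∈ Set.Icc (a k 0) (a k (Fin.last n)) :=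
    fun k j => ⟨(ha k).monotone (Fin.zero_le _), (ha k).monotone (Fin.le_last _)⟩
  set F : ℕ → ℝ := fun t => φ (fun k => u k (toIdx n (gridPt d n ω t k))) with hF
  set G : Fin (d * n) → ℝ := fun t =>
    (φ (fun k => if k = ω t then u (ω t) (toIdx n (gridPt d n ω ((t : ℕ) + 1) k))
          else a k (toIdx n (gridPt d n ω ((t : ℕ) + 1) k))) -
      φ (fun k => if k = ω t then u (ω t) (toIdx n (gridPt d n ω (t : ℕ) k))
          else a k (toIdx n (gridPt d n ω (t : ℕ) k)))) with hG
  have step : ∀ t : Fin (d * n), F ((t : ℕ) + 1) - F (t : ℕ) ≤ G t := by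
    intro t
    set p : Fin d → ℝ := fun k => u k (toIdx n (gridPt d n ω (t : ℕ) k)) with hp
    set q : Fin d → ℝ := fun k => a k (toIdx n (gridPt d n ω (t : ℕ) k)) with hq
    have hoff : ∀ k, ¬ (k = ω t) → toIdx n (gridPt d n ω ((t : ℕ) + 1) k) =
        toIdx n (gridPt d n ω (t : ℕ) k) := by
      intro k hk
      rw [gridPt_succ_ne d n ω t (fun h => hk h.symm)]
    have e1 : (fun k => u k (toIdx n (gridPt d n ω ((t : ℕ) + 1) k))) =
        Function.update p (ω t) (u (ω t) (toIdx n (gridPt d n ω ((t : ℕ) + 1) (ω t)))) := by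
      funext k
      rw [Function.update_apply]
      split_ifs with h
      · subst h; rfl
      · rw [hp]; rw [hoff k h]
    have e2 : (fun k => if k = ω t then u (ω t) (toIdx n (gridPt d n ω ((t : ℕ) + 1) k))
          else a k (toIdx n (gridPt d n ω ((t : ℕ) + 1) k))) =
        Function.update q (ω t) (u (ω t) (toIdx n (gridPt d n ω ((t : ℕ) + 1) (ω t)))) := by
      funext k
      rw [Function.update_apply]
      split_ifs with h
      · subst h; rfl
      · rw [hq]; rw [hoff k h]
    have e3 : (fun k => if k = ω t then u (ω t) (toIdx n (gridPt d n ω (t : ℕ) k))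
          else a k (toIdx n (gridPt d n ω (t : ℕ) k))) =
        Function.update q (ω t) (u (ω t) (toIdx n (gridPt d n ω (t : ℕ) (ω t)))) := by
      funext k
      rw [Function.update_apply]
      split_ifs with h
      · subst h; rfl
      · rfl
    have e4 : (fun k => u k (toIdx n (gridPt d n ω (t : ℕ) k))) =
        Function.update p (ω t) (u (ω t) (toIdx n (gridPt d n ω (t : ℕ) (ω t)))) := by
      funext k
      rw [Function.update_apply]
      split_ifs with h
      · subst h; rfl
      · rfl
    have hmono : u (ω t) (toIdx n (gridPt d n ω (t : ℕ) (ω t))) ≤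
        u (ω t) (toIdx n (gridPt d n ω ((t : ℕ) + 1) (ω t))) :=
      hum (ω t) (toIdx_mono (gridPt_mono d n ω (ω t) (Nat.le_succ _)))
    have := aux_superdiff d n a φ hsuper (ω t) p q (fun k => box k _) (fun k => boxa k _)
      (fun k => hua k _)
      (u (ω t) (toIdx n (gridPt d n ω (t : ℕ) (ω t))))
      (u (ω t) (toIdx n (gridPt d n ω ((t : ℕ) + 1) (ω t)))) (box _ _) (box _ _) hmono
    rw [hG]
    simp only [hF]
    rw [e1, e2, e3, e4]
    exact this
  have h1 : F 0 = φ (fun i => a i 0) := by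
    simp only [hF]
    congr 1
    funext k
    rw [gridPt_zero, toIdx_zero, hu0]
  have h2 : F (d * n) = φ (fun i => u i (Fin.last n)) := by
    simp only [hF]
    congr 1
    funext k
    rw [gridPt_total d n ω hω, toIdx_last]
  have sum1 : ∑ t : Fin (d * n), (F ((t : ℕ) + 1) - F (t : ℕ)) = F (d * n) - F 0 := by
    rw [Fin.sum_univ_eq_sum_range (fun t => F (t + 1) - F t) (d * n)]
    exact Finset.sum_range_sub F (d * n)
  have sum2 : ∑ t : Fin (d * n), (F ((t : ℕ) + 1) - F (t : ℕ)) ≤ ∑ t : Fin (d * n), G t :=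
    Finset.sum_le_sum (fun t _ => step t)
  have regroup : ∑ i, BiM d n φ ω i (u i) a = ∑ t : Fin (d * n), G t := by
    rw [← Finset.sum_fiberwise Finset.univ ω G]
    apply Finset.sum_congr rfl
    intro i _
    unfold BiM
    apply Finset.sum_congr rfl
    intro t ht
    have hti : ω t = i := (Finset.mem_filter.mp ht).2
    subst hti
    rfl
  rw [regroup]
  rw [sum1, h1, h2] at sum2
  linarith

lemma aux_abel (n : ℕ) (hn : 1 ≤ n) (CC EE : ℕ → ℝ)
    (hEE0 : EE 0 = 0) (hEEn : EE n = 0) (hEEpos : ∀ k, 0 ≤ EE k)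
    (hmono : ∀ k, k + 1 < n → CC k ≤ CC (k + 1)) :
    ∑ k ∈ Finset.range n, CC k * (EE (k + 1) - EE k) ≤ 0 := by
  obtain ⟨m, rfl⟩ : ∃ m, n = m + 1 := ⟨n - 1, by omega⟩
  have expand : ∑ k ∈ Finset.range (m + 1), CC k * (EE (k + 1) - EE k)
      = ∑ k ∈ Finset.range (m + 1), CC k * EE (k + 1)
        - ∑ k ∈ Finset.range (m + 1), CC k * EE k := by
    rw [← Finset.sum_sub_distrib]
    apply Finset.sum_congr rfl
    intros
    ring
  rw [expand, Finset.sum_range_succ (fun k => CC k * EE (k + 1)) m,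
    Finset.sum_range_succ' (fun k => CC k * EE k) m, hEEn, hEE0]
  have combine : ∑ k ∈ Finset.range m, CC k * EE (k + 1)
      - ∑ k ∈ Finset.range m, CC (k + 1) * EE (k + 1)
      = ∑ k ∈ Finset.range m, (CC k - CC (k + 1)) * EE (k + 1) := by
    rw [← Finset.sum_sub_distrib]
    apply Finset.sum_congr rfl
    intros
    ring
  have hle : ∑ k ∈ Finset.range m, (CC k - CC (k + 1)) * EE (k + 1) ≤ 0 := by
    apply Finset.sum_nonpos
    intro k hk
    have hk' : k + 1 < m + 1 := by
      rw [Finset.mem_range] at hk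
      omega
    exact mul_nonpos_of_nonpos_of_nonneg (sub_nonpos.mpr (hmono k hk')) (hEEpos _)
  have : CC m * 0 = 0 := by ring
  rw [this]
  have : CC 0 * 0 = 0 := by ring
  rw [this]
  linarith [hle, combine]

lemma aux_cmono (d n : ℕ) (a : Fin d → Fin (n + 1) → ℝ) (ha : ∀ i, StrictMono (a i))
    (φ : (Fin d → ℝ) → ℝ)
    (hsuper : ∀ y ∈ Set.Icc (fun i => a i 0) (fun i => a i (Fin.last n)),
      ∀ z ∈ Set.Icc (fun i => a i 0) (fun i => a i (Fin.last n)),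
        φ y + φ z ≤ φ (y ⊔ z) + φ (y ⊓ z))
    (hconvarg : ∀ i : Fin d, ∀ g ∈ Set.Icc (fun i' => a i' 0) (fun i' => a i' (Fin.last n)),
      ConvexOn ℝ (Set.Icc (a i 0) (a i (Fin.last n))) (fun t => φ (Function.update g i t)))
    (ω : Fin (d * n) → Fin d) (i : Fin d) (t1 t2 : Fin (d * n)) (k : ℕ)
    (hk2 : k + 1 < n)
    (h1i : ω t1 = i) (h2i : ω t2 = i)
    (h12 : (t1 : ℕ) ≤ (t2 : ℕ))
    (hg1 : gridPt d n ω (t1 : ℕ) i = k) (hg2 : gridPt d n ω (t2 : ℕ) i = k + 1) :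
    (φ (fun k' => a k' (toIdx n (gridPt d n ω ((t1 : ℕ) + 1) k'))) -
        φ (fun k' => a k' (toIdx n (gridPt d n ω (t1 : ℕ) k')))) /
      (a i (toIdx n (gridPt d n ω ((t1 : ℕ) + 1) i)) - a i (toIdx n (gridPt d n ω (t1 : ℕ) i)))
    ≤ (φ (fun k' => a k' (toIdx n (gridPt d n ω ((t2 : ℕ) + 1) k'))) -
        φ (fun k' => a k' (toIdx n (gridPt d n ω (t2 : ℕ) k')))) /
      (a i (toIdx n (gridPt d n ω ((t2 : ℕ) + 1) i)) - a i (toIdx n (gridPt d n ω (t2 : ℕ) i))) := by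
  have boxa : ∀ k' (j : Fin (n + 1)), a k' j ∈ Set.Icc (a k' 0) (a k' (Fin.last n)) :=
    fun k' j => ⟨(ha k').monotone (Fin.zero_le _), (ha k').monotone (Fin.le_last _)⟩
  have hs1 : gridPt d n ω ((t1 : ℕ) + 1) i = k + 1 := by
    have h := gridPt_succ_self d n ω t1
    rw [h1i, hg1] at h
    exact h
  have hs2 : gridPt d n ω ((t2 : ℕ) + 1) i = k + 2 := by
    have h := gridPt_succ_self d n ω t2
    rw [h2i, hg2] at h
    exact h
  obtain ⟨q1, hq1⟩ : ∃ q : Fin d → ℝ, q = fun k' => a k' (toIdx n (gridPt d n ω (t1 : ℕ) k')) :=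
    ⟨_, rfl⟩
  obtain ⟨q2, hq2⟩ : ∃ q : Fin d → ℝ, q = fun k' => a k' (toIdx n (gridPt d n ω (t2 : ℕ) k')) :=
    ⟨_, rfl⟩
  have hoff1 : ∀ k', ¬ (k' = i) → gridPt d n ω ((t1 : ℕ) + 1) k' = gridPt d n ω (t1 : ℕ) k' := by
    intro k' hk'
    exact gridPt_succ_ne d n ω t1 (fun h => hk' (h1i ▸ h.symm ▸ rfl))
  have hoff2 : ∀ k', ¬ (k' = i) → gridPt d n ω ((t2 : ℕ) + 1) k' = gridPt d n ω (t2 : ℕ) k' := by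
    intro k' hk'
    exact gridPt_succ_ne d n ω t2 (fun h => hk' (h2i ▸ h.symm ▸ rfl))
  have ea1 : (fun k' => a k' (toIdx n (gridPt d n ω ((t1 : ℕ) + 1) k'))) =
      Function.update q1 i (a i (toIdx n (k + 1))) := by
    funext k'
    rw [Function.update_apply]
    split_ifs with h
    · subst h; rw [hs1]
    · rw [hq1, hoff1 k' h]
  have ea2 : (fun k' => a k' (toIdx n (gridPt d n ω (t1 : ℕ) k'))) =
      Function.update q1 i (a i (toIdx n k)) := by
    funext k'
    rw [Function.update_apply]
    split_ifs with h
    · subst h; rw [hg1]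
    · rw [hq1]
  have eb1 : (fun k' => a k' (toIdx n (gridPt d n ω ((t2 : ℕ) + 1) k'))) =
      Function.update q2 i (a i (toIdx n (k + 2))) := by
    funext k'
    rw [Function.update_apply]
    split_ifs with h
    · subst h; rw [hs2]
    · rw [hq2, hoff2 k' h]
  have eb2 : (fun k' => a k' (toIdx n (gridPt d n ω (t2 : ℕ) k'))) =
      Function.update q2 i (a i (toIdx n (k + 1))) := by
    funext k'
    rw [Function.update_apply]
    split_ifs with h
    · subst h; rw [hg2]
    · rw [hq2]
  rw [ea1, ea2, eb1, eb2, hs1, hg1, hs2, hg2]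
  have hA01 : a i (toIdx n k) < a i (toIdx n (k + 1)) :=
    ha i (toIdx_lt (Nat.lt_succ_self k) (by omega))
  have hA12 : a i (toIdx n (k + 1)) < a i (toIdx n (k + 2)) :=
    ha i (toIdx_lt (by omega) (by omega))
  have hq12 : ∀ k', q1 k' ≤ q2 k' := by
    intro k'
    rw [hq1, hq2]
    exact (ha k').monotone (toIdx_mono (gridPt_mono d n ω k' h12))
  have hq1box : ∀ k', q1 k' ∈ Set.Icc (a k' 0) (a k' (Fin.last n)) := by
    intro k'
    rw [hq1]
    exact boxa k' _
  have hq2boxp : ∀ k', q2 k' ∈ Set.Icc (a k' 0) (a k' (Fin.last n)) := by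
    intro k'
    rw [hq2]
    exact boxa k' _
  have hq2box : q2 ∈ Set.Icc (fun i' => a i' 0) (fun i' => a i' (Fin.last n)) := by
    constructor
    · intro k'; exact (hq2boxp k').1
    · intro k'; exact (hq2boxp k').2
  have step1 : φ (Function.update q1 i (a i (toIdx n (k + 1)))) -
      φ (Function.update q1 i (a i (toIdx n k))) ≤
      φ (Function.update q2 i (a i (toIdx n (k + 1)))) -
      φ (Function.update q2 i (a i (toIdx n k))) :=
    aux_superdiff d n a φ hsuper i q1 q2 hq1box hq2boxp hq12
      (a i (toIdx n k)) (a i (toIdx n (k + 1))) (boxa i _) (boxa i _) hA01.le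
  have hpos : (0:ℝ) < a i (toIdx n (k + 1)) - a i (toIdx n k) := sub_pos.mpr hA01
  have step1' := (div_le_div_iff_of_pos_right hpos).mpr step1
  have step2 := (hconvarg i q2 hq2box).slope_mono_adjacent (boxa i (toIdx n k))
    (boxa i (toIdx n (k + 2))) hA01 hA12
  exact le_trans step1' step2

lemma aux_E2 (n : ℕ) (hn : 1 ≤ n) (C : Fin n → ℝ) (u v : Fin (n + 1) → ℝ)
    (hC : ∀ (k : ℕ) (h : k + 1 < n), C ⟨k, by omega⟩ ≤ C ⟨k + 1, h⟩)
    (h0 : u 0 = v 0) (hl : u (Fin.last n) = v (Fin.last n)) (hvu : ∀ j, v j ≤ u j) :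
    ∑ j : Fin n, C j * (u (toIdx n ((j : ℕ) + 1)) - u (toIdx n (j : ℕ))) ≤
      ∑ j : Fin n, C j * (v (toIdx n ((j : ℕ) + 1)) - v (toIdx n (j : ℕ))) := by
  have key := aux_abel n hn (fun k => if h : k < n then C ⟨k, h⟩ else 0)
      (fun k => u (toIdx n k) - v (toIdx n k)) ?_ ?_ ?_ ?_
  · have expand : ∑ j : Fin n, C j * (u (toIdx n ((j : ℕ) + 1)) - u (toIdx n (j : ℕ)))
        - ∑ j : Fin n, C j * (v (toIdx n ((j : ℕ) + 1)) - v (toIdx n (j : ℕ)))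
        = ∑ k ∈ Finset.range n, (fun k => if h : k < n then C ⟨k, h⟩ else 0) k *
            ((fun k => u (toIdx n k) - v (toIdx n k)) (k + 1) -
              (fun k => u (toIdx n k) - v (toIdx n k)) k) := by
      rw [← Finset.sum_sub_distrib,
        ← Fin.sum_univ_eq_sum_range (fun k => (if h : k < n then C ⟨k, h⟩ else 0) *
          ((u (toIdx n (k + 1)) - v (toIdx n (k + 1))) - (u (toIdx n k) - v (toIdx n k)))) n]
      apply Finset.sum_congr rfl
      intro j _
      rw [dif_pos j.isLt, Fin.eta]
      ring
    linarith [key, expand.symm.le]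
  · show u (toIdx n 0) - v (toIdx n 0) = 0
    rw [toIdx_zero, h0, sub_self]
  · show u (toIdx n n) - v (toIdx n n) = 0
    rw [toIdx_last, hl, sub_self]
  · intro k
    exact sub_nonneg.mpr (hvu _)
  · intro k hk
    rw [dif_pos (by omega : k < n), dif_pos hk]
    exact hC k hk

lemma aux_BiM_le (d n : ℕ) (hn : 1 ≤ n) (a : Fin d → Fin (n + 1) → ℝ)
    (ha : ∀ i, StrictMono (a i)) (φ : (Fin d → ℝ) → ℝ)
    (hsuper : ∀ y ∈ Set.Icc (fun i => a i 0) (fun i => a i (Fin.last n)),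
      ∀ z ∈ Set.Icc (fun i => a i 0) (fun i => a i (Fin.last n)),
        φ y + φ z ≤ φ (y ⊔ z) + φ (y ⊓ z))
    (hconvarg : ∀ i : Fin d, ∀ g ∈ Set.Icc (fun i' => a i' 0) (fun i' => a i' (Fin.last n)),
      ConvexOn ℝ (Set.Icc (a i 0) (a i (Fin.last n))) (fun t => φ (Function.update g i t)))
    (ω : Fin (d * n) → Fin d) (hω : IsDirVec d n ω) (i : Fin d)
    (u v : Fin (n + 1) → ℝ)
    (hu0 : u 0 = a i 0) (hum : Monotone u) (hua : ∀ j, u j ≤ a i j)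
    (hv0 : v 0 = a i 0) (hvm : Monotone v) (hva : ∀ j, v j ≤ a i j)
    (hvu : ∀ j, v j ≤ u j) (hlast : u (Fin.last n) = v (Fin.last n)) :
    BiM d n φ ω i u a ≤
      ∑ t ∈ Finset.univ.filter (fun t : Fin (d * n) => ω t = i),
        ((φ (fun k => a k (toIdx n (gridPt d n ω ((t : ℕ) + 1) k))) -
            φ (fun k => a k (toIdx n (gridPt d n ω (t : ℕ) k)))) /
          (a i (toIdx n (gridPt d n ω ((t : ℕ) + 1) i)) -
            a i (toIdx n (gridPt d n ω (t : ℕ) i)))) *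
        (v (toIdx n (gridPt d n ω ((t : ℕ) + 1) i)) - v (toIdx n (gridPt d n ω (t : ℕ) i))) := by
  have boxa : ∀ k' (j : Fin (n + 1)), a k' j ∈ Set.Icc (a k' 0) (a k' (Fin.last n)) :=
    fun k' j => ⟨(ha k').monotone (Fin.zero_le _), (ha k').monotone (Fin.le_last _)⟩
  have boxu : ∀ j, u j ∈ Set.Icc (a i 0) (a i (Fin.last n)) :=
    aux_Q_box d n a ha i u hu0 hum hua
  -- Step 1 : BiM u ≤ sum with u in place of v
  have E1 : BiM d n φ ω i u a ≤
      ∑ t ∈ Finset.univ.filter (fun t : Fin (d * n) => ω t = i),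
        ((φ (fun k => a k (toIdx n (gridPt d n ω ((t : ℕ) + 1) k))) -
            φ (fun k => a k (toIdx n (gridPt d n ω (t : ℕ) k)))) /
          (a i (toIdx n (gridPt d n ω ((t : ℕ) + 1) i)) -
            a i (toIdx n (gridPt d n ω (t : ℕ) i)))) *
        (u (toIdx n (gridPt d n ω ((t : ℕ) + 1) i)) - u (toIdx n (gridPt d n ω (t : ℕ) i))) := by
    unfold BiM
    apply Finset.sum_le_sum
    intro t ht
    have hti : ω t = i := (Finset.mem_filter.mp ht).2
    have hoff : ∀ k, ¬ (k = i) → gridPt d n ω ((t : ℕ) + 1) k = gridPt d n ω (t : ℕ) k := by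
      intro k hk
      exact gridPt_succ_ne d n ω t (fun h => hk (hti ▸ h.symm ▸ rfl))
    have hgs : gridPt d n ω ((t : ℕ) + 1) i = gridPt d n ω (t : ℕ) i + 1 := by
      have h := gridPt_succ_self d n ω t
      rw [hti] at h
      exact h
    have hgle : gridPt d n ω ((t : ℕ) + 1) i ≤ n := gridPt_le d n ω hω _ i
    have hLbox : (fun k => a k (toIdx n (gridPt d n ω (t : ℕ) k))) ∈
        Set.Icc (fun i' => a i' 0) (fun i' => a i' (Fin.last n)) := by
      constructor
      · intro k; exact (boxa k _).1
      · intro k; exact (boxa k _).2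
    have key := aux_secant (hconvarg i (fun k => a k (toIdx n (gridPt d n ω (t : ℕ) k))) hLbox)
      (boxu (toIdx n (gridPt d n ω (t : ℕ) i)))
      (boxu (toIdx n (gridPt d n ω ((t : ℕ) + 1) i)))
      (boxa i (toIdx n (gridPt d n ω (t : ℕ) i)))
      (boxa i (toIdx n (gridPt d n ω ((t : ℕ) + 1) i)))
      (hum (toIdx_mono (gridPt_mono d n ω i (Nat.le_succ _))))
      (hua _) (hua _)
      (ha i (toIdx_lt (by omega : gridPt d n ω (t : ℕ) i < gridPt d n ω ((t : ℕ) + 1) i) hgle))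
    have eA : (fun k => if k = i then u (toIdx n (gridPt d n ω ((t : ℕ) + 1) k))
          else a k (toIdx n (gridPt d n ω ((t : ℕ) + 1) k))) =
        Function.update (fun k => a k (toIdx n (gridPt d n ω (t : ℕ) k))) i
          (u (toIdx n (gridPt d n ω ((t : ℕ) + 1) i))) := by
      funext k
      rw [Function.update_apply]
      split_ifs with h
      · subst h; rfl
      · rw [hoff k h]
    have eB : (fun k => if k = i then u (toIdx n (gridPt d n ω (t : ℕ) k))
          else a k (toIdx n (gridPt d n ω (t : ℕ) k))) =
        Function.update (fun k => a k (toIdx n (gridPt d n ω (t : ℕ) k))) i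
          (u (toIdx n (gridPt d n ω (t : ℕ) i))) := by
      funext k
      rw [Function.update_apply]
      split_ifs with h
      · subst h; rfl
      · rfl
    have eC : (fun k => a k (toIdx n (gridPt d n ω ((t : ℕ) + 1) k))) =
        Function.update (fun k => a k (toIdx n (gridPt d n ω (t : ℕ) k))) i
          (a i (toIdx n (gridPt d n ω ((t : ℕ) + 1) i))) := by
      funext k
      rw [Function.update_apply]
      split_ifs with h
      · subst h; rfl
      · rw [hoff k h]
    have eD : (fun k => a k (toIdx n (gridPt d n ω (t : ℕ) k))) =
        Function.update (fun k => a k (toIdx n (gridPt d n ω (t : ℕ) k))) i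
          (a i (toIdx n (gridPt d n ω (t : ℕ) i))) := by
      funext k
      rw [Function.update_apply]
      split_ifs with h
      · subst h; rfl
      · rfl
    rw [← eA, ← eB, ← eC, ← eD] at key
    exact key
  refine le_trans E1 ?_
  -- Step 2 : enumeration of the fiber
  have hcard := hω i
  set Fi := Finset.univ.filter (fun t : Fin (d * n) => ω t = i) with hFi
  set e := Fi.orderIsoOfFin hcard with he
  set occ : Fin n → Fin (d * n) := fun j => ((e j : {x // x ∈ Fi}) : Fin (d * n)) with hocc
  have occ_mem : ∀ j, ω (occ j) = i := by
    intro j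
    have h2 := (e j).2
    exact (Finset.mem_filter.mp h2).2
  have occ_mono : StrictMono occ := by
    intro j j' h
    exact Subtype.coe_lt_coe.mpr ((OrderIso.lt_iff_lt e).mpr h)
  have occ_grid : ∀ j : Fin n, gridPt d n ω ((occ j : Fin (d * n)) : ℕ) i = (j : ℕ) := by
    intro j
    unfold gridPt
    have himg : Finset.univ.filter
        (fun t' : Fin (d * n) => (t' : ℕ) < ((occ j : Fin (d * n)) : ℕ) ∧ ω t' = i) =
        Finset.image (fun k : Fin n => occ k) (Finset.Iio j) := by
      ext t'
      simp only [Finset.mem_filter, Finset.mem_image, Finset.mem_Iio, Finset.mem_univ, true_and]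
      constructor
      · rintro ⟨hlt, hti⟩
        have ht'mem : t' ∈ Fi :=
          Finset.mem_filter.mpr ⟨Finset.mem_univ _, hti⟩
        refine ⟨e.symm ⟨t', ht'mem⟩, ?_, ?_⟩
        · rw [← OrderIso.lt_iff_lt e, OrderIso.apply_symm_apply]
          exact Subtype.coe_lt_coe.mp (Fin.lt_def.mpr hlt)
        · show ((e (e.symm ⟨t', ht'mem⟩) : {x // x ∈ Fi}) : Fin (d * n)) = t'
          rw [OrderIso.apply_symm_apply]
      · rintro ⟨k, hk, rfl⟩
        exact ⟨Fin.lt_def.mp (occ_mono hk), occ_mem k⟩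
    rw [himg, Finset.card_image_of_injective _ occ_mono.injective, Fin.card_Iio]
  have occ_succ : ∀ j : Fin n, gridPt d n ω (((occ j : Fin (d * n)) : ℕ) + 1) i = (j : ℕ) + 1 := by
    intro j
    have h := gridPt_succ_self d n ω (occ j)
    rw [occ_mem j, occ_grid j] at h
    exact h
  have hsum : ∀ f : Fin (d * n) → ℝ, ∑ t ∈ Fi, f t = ∑ j : Fin n, f (occ j) := by
    intro f
    rw [← Finset.sum_coe_sort Fi f]
    exact (Equiv.sum_comp e.toEquiv (fun x => f ↑x)).symm
  have convert_u : ∑ t ∈ Fi,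
      ((φ (fun k => a k (toIdx n (gridPt d n ω ((t : ℕ) + 1) k))) -
          φ (fun k => a k (toIdx n (gridPt d n ω (t : ℕ) k)))) /
        (a i (toIdx n (gridPt d n ω ((t : ℕ) + 1) i)) -
          a i (toIdx n (gridPt d n ω (t : ℕ) i)))) *
      (u (toIdx n (gridPt d n ω ((t : ℕ) + 1) i)) - u (toIdx n (gridPt d n ω (t : ℕ) i)))
      = ∑ j : Fin n,
      ((φ (fun k => a k (toIdx n (gridPt d n ω (((occ j : Fin (d * n)) : ℕ) + 1) k))) -
          φ (fun k => a k (toIdx n (gridPt d n ω ((occ j : Fin (d * n)) : ℕ) k)))) /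
        (a i (toIdx n (gridPt d n ω (((occ j : Fin (d * n)) : ℕ) + 1) i)) -
          a i (toIdx n (gridPt d n ω ((occ j : Fin (d * n)) : ℕ) i)))) *
      (u (toIdx n ((j : ℕ) + 1)) - u (toIdx n (j : ℕ))) := by
    rw [hsum]
    apply Finset.sum_congr rfl
    intro j _
    congr 1
    rw [occ_succ j, occ_grid j]
  have convert_v : ∑ t ∈ Fi,
      ((φ (fun k => a k (toIdx n (gridPt d n ω ((t : ℕ) + 1) k))) -
          φ (fun k => a k (toIdx n (gridPt d n ω (t : ℕ) k)))) /
        (a i (toIdx n (gridPt d n ω ((t : ℕ) + 1) i)) -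
          a i (toIdx n (gridPt d n ω (t : ℕ) i)))) *
      (v (toIdx n (gridPt d n ω ((t : ℕ) + 1) i)) - v (toIdx n (gridPt d n ω (t : ℕ) i)))
      = ∑ j : Fin n,
      ((φ (fun k => a k (toIdx n (gridPt d n ω (((occ j : Fin (d * n)) : ℕ) + 1) k))) -
          φ (fun k => a k (toIdx n (gridPt d n ω ((occ j : Fin (d * n)) : ℕ) k)))) /
        (a i (toIdx n (gridPt d n ω (((occ j : Fin (d * n)) : ℕ) + 1) i)) -
          a i (toIdx n (gridPt d n ω ((occ j : Fin (d * n)) : ℕ) i)))) *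
      (v (toIdx n ((j : ℕ) + 1)) - v (toIdx n (j : ℕ))) := by
    rw [hsum]
    apply Finset.sum_congr rfl
    intro j _
    congr 1
    rw [occ_succ j, occ_grid j]
  rw [convert_u, convert_v]
  apply aux_E2 n hn _ u v ?_ (by rw [hu0, hv0]) hlast hvu
  intro k hk
  exact aux_cmono d n a ha φ hsuper hconvarg ω i (occ ⟨k, by omega⟩) (occ ⟨k + 1, hk⟩) k hk
    (occ_mem _) (occ_mem _)
    (le_of_lt (Fin.lt_def.mp (occ_mono (by exact Fin.mk_lt_mk.mpr (Nat.lt_succ_self k)))))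
    (occ_grid ⟨k, by omega⟩) (occ_grid ⟨k + 1, hk⟩)

lemma aux_dirvec_exists (d n : ℕ) (hn : 1 ≤ n) :
    ∃ ω : Fin (d * n) → Fin d, IsDirVec d n ω := by
  have hn0 : 0 < n := hn
  have hbound : ∀ (i : Fin d) (k : ℕ), k < n → (i : ℕ) * n + k < d * n := by
    intro i k hkn
    have hi : (i : ℕ) + 1 ≤ d := i.isLt
    nlinarith
  refine ⟨fun t => ⟨(t : ℕ) / n,
    Nat.div_lt_of_lt_mul (lt_of_lt_of_le t.isLt (le_of_eq (Nat.mul_comm d n)))⟩, ?_⟩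
  intro i
  apply Finset.card_eq_of_bijective
    (fun k hk => (⟨(i : ℕ) * n + k, hbound i k hk⟩ : Fin (d * n)))
  · intro t ht
    simp only [Finset.mem_filter, Finset.mem_univ, true_and] at ht
    have hval : (t : ℕ) / n = (i : ℕ) := congrArg Fin.val ht
    refine ⟨(t : ℕ) % n, Nat.mod_lt _ hn0, ?_⟩
    apply Fin.ext
    show (i : ℕ) * n + (t : ℕ) % n = (t : ℕ)
    have hdm := Nat.div_add_mod (t : ℕ) n
    rw [hval, Nat.mul_comm n (i : ℕ)] at hdm
    exact hdm
  · intro k hk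
    simp only [Finset.mem_filter, Finset.mem_univ, true_and]
    apply Fin.ext
    show ((i : ℕ) * n + k) / n = (i : ℕ)
    rw [Nat.mul_comm, Nat.mul_add_div hn0, Nat.div_eq_of_lt hk, Nat.add_zero]
  · intro k k' hk hk' heq
    have := congrArg Fin.val heq
    simp only at this
    omega

lemma aux_omega_set_finite {N D : ℕ} (P : (Fin N → Fin D) → Prop) (f : (Fin N → Fin D) → ℝ) :
    {r : ℝ | ∃ ω, P ω ∧ r = f ω}.Finite := by
  have hsub : {r : ℝ | ∃ ω, P ω ∧ r = f ω} ⊆ Set.range f := by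
    rintro r ⟨ω, _, rfl⟩
    exact ⟨ω, rfl⟩
  exact (Set.finite_range f).subset hsub

def Lsum (d n : ℕ) (φ : (Fin d → ℝ) → ℝ) (ω : Fin (d * n) → Fin d) (i : Fin d)
    (a : Fin d → Fin (n + 1) → ℝ) (x : Fin (n + 1) → ℝ) : ℝ :=
  ∑ t ∈ Finset.univ.filter (fun t : Fin (d * n) => ω t = i),
    ((φ (fun k => a k (toIdx n (gridPt d n ω ((t : ℕ) + 1) k))) -
        φ (fun k => a k (toIdx n (gridPt d n ω (t : ℕ) k)))) /
      (a i (toIdx n (gridPt d n ω ((t : ℕ) + 1) i)) -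
        a i (toIdx n (gridPt d n ω (t : ℕ) i)))) *
    (x (toIdx n (gridPt d n ω ((t : ℕ) + 1) i)) - x (toIdx n (gridPt d n ω (t : ℕ) i)))

lemma aux_BiM_le' (d n : ℕ) (hn : 1 ≤ n) (a : Fin d → Fin (n + 1) → ℝ)
    (ha : ∀ i, StrictMono (a i)) (φ : (Fin d → ℝ) → ℝ)
    (hsuper : ∀ y ∈ Set.Icc (fun i => a i 0) (fun i => a i (Fin.last n)),
      ∀ z ∈ Set.Icc (fun i => a i 0) (fun i => a i (Fin.last n)),
        φ y + φ z ≤ φ (y ⊔ z) + φ (y ⊓ z))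
    (hconvarg : ∀ i : Fin d, ∀ g ∈ Set.Icc (fun i' => a i' 0) (fun i' => a i' (Fin.last n)),
      ConvexOn ℝ (Set.Icc (a i 0) (a i (Fin.last n))) (fun t => φ (Function.update g i t)))
    (ω : Fin (d * n) → Fin d) (hω : IsDirVec d n ω) (i : Fin d)
    (u v : Fin (n + 1) → ℝ)
    (hu0 : u 0 = a i 0) (hum : Monotone u) (hua : ∀ j, u j ≤ a i j)
    (hv0 : v 0 = a i 0) (hvm : Monotone v) (hva : ∀ j, v j ≤ a i j)
    (hvu : ∀ j, v j ≤ u j) (hlast : u (Fin.last n) = v (Fin.last n)) :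
    BiM d n φ ω i u a ≤ Lsum d n φ ω i a v :=
  aux_BiM_le d n hn a ha φ hsuper hconvarg ω hω i u v hu0 hum hua hv0 hvm hva hvu hlast

lemma aux_sum_mul_sub {k : ℕ} (lam : Fin k → ℝ) (c : ℝ) (A B : Fin k → ℝ) :
    ∑ idx, lam idx * (c * (A idx - B idx)) =
      c * ((∑ idx, lam idx * A idx) - (∑ idx, lam idx * B idx)) := by
  rw [mul_sub, Finset.mul_sum, Finset.mul_sum, ← Finset.sum_sub_distrib]
  apply Finset.sum_congr rfl
  intros
  ring

lemma aux_L_linear (d n : ℕ) (φ : (Fin d → ℝ) → ℝ) (ω : Fin (d * n) → Fin d) (i : Fin d)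
    (a : Fin d → Fin (n + 1) → ℝ) {k : ℕ} (lam : Fin k → ℝ) (x : Fin k → Fin (n + 1) → ℝ) :
    ∑ idx, lam idx * Lsum d n φ ω i a (x idx) =
      Lsum d n φ ω i a (fun j => ∑ idx, lam idx * x idx j) := by
  unfold Lsum
  simp only []
  rw [Finset.sum_congr rfl (fun idx _ => Finset.mul_sum _ _ _), Finset.sum_comm]
  apply Finset.sum_congr rfl
  intro t _
  exact aux_sum_mul_sub lam _ (fun idx => x idx (toIdx n (gridPt d n ω ((t : ℕ) + 1) i)))
    (fun idx => x idx (toIdx n (gridPt d n ω (t : ℕ) i)))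

lemma aux_L_mono (d n : ℕ) (hn : 1 ≤ n) (a : Fin d → Fin (n + 1) → ℝ)
    (ha : ∀ i, StrictMono (a i)) (φ : (Fin d → ℝ) → ℝ)
    (hsuper : ∀ y ∈ Set.Icc (fun i => a i 0) (fun i => a i (Fin.last n)),
      ∀ z ∈ Set.Icc (fun i => a i 0) (fun i => a i (Fin.last n)),
        φ y + φ z ≤ φ (y ⊔ z) + φ (y ⊓ z))
    (hconvarg : ∀ i : Fin d, ∀ g ∈ Set.Icc (fun i' => a i' 0) (fun i' => a i' (Fin.last n)),
      ConvexOn ℝ (Set.Icc (a i 0) (a i (Fin.last n))) (fun t => φ (Function.update g i t)))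
    (ω : Fin (d * n) → Fin d) (hω : IsDirVec d n ω) (i : Fin d)
    (u v : Fin (n + 1) → ℝ)
    (hu0 : u 0 = v 0) (hvu : ∀ j, v j ≤ u j) (hlast : u (Fin.last n) = v (Fin.last n)) :
    Lsum d n φ ω i a u ≤ Lsum d n φ ω i a v := by
  unfold Lsum
  have hcard := hω i
  set Fi := Finset.univ.filter (fun t : Fin (d * n) => ω t = i) with hFi
  set e := Fi.orderIsoOfFin hcard with he
  set occ : Fin n → Fin (d * n) := fun j => ((e j : {x // x ∈ Fi}) : Fin (d * n)) with hocc
  have occ_mem : ∀ j, ω (occ j) = i := by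
    intro j
    have h2 := (e j).2
    exact (Finset.mem_filter.mp h2).2
  have occ_mono : StrictMono occ := by
    intro j j' h
    exact Subtype.coe_lt_coe.mpr ((OrderIso.lt_iff_lt e).mpr h)
  have occ_grid : ∀ j : Fin n, gridPt d n ω ((occ j : Fin (d * n)) : ℕ) i = (j : ℕ) := by
    intro j
    unfold gridPt
    have himg : Finset.univ.filter
        (fun t' : Fin (d * n) => (t' : ℕ) < ((occ j : Fin (d * n)) : ℕ) ∧ ω t' = i) =
        Finset.image (fun k : Fin n => occ k) (Finset.Iio j) := by
      ext t'
      simp only [Finset.mem_filter, Finset.mem_image, Finset.mem_Iio, Finset.mem_univ, true_and]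
      constructor
      · rintro ⟨hlt, hti⟩
        have ht'mem : t' ∈ Fi :=
          Finset.mem_filter.mpr ⟨Finset.mem_univ _, hti⟩
        refine ⟨e.symm ⟨t', ht'mem⟩, ?_, ?_⟩
        · rw [← OrderIso.lt_iff_lt e, OrderIso.apply_symm_apply]
          exact Subtype.coe_lt_coe.mp (Fin.lt_def.mpr hlt)
        · show ((e (e.symm ⟨t', ht'mem⟩) : {x // x ∈ Fi}) : Fin (d * n)) = t'
          rw [OrderIso.apply_symm_apply]
      · rintro ⟨k, hk, rfl⟩
        exact ⟨Fin.lt_def.mp (occ_mono hk), occ_mem k⟩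
    rw [himg, Finset.card_image_of_injective _ occ_mono.injective, Fin.card_Iio]
  have occ_succ : ∀ j : Fin n, gridPt d n ω (((occ j : Fin (d * n)) : ℕ) + 1) i = (j : ℕ) + 1 := by
    intro j
    have h := gridPt_succ_self d n ω (occ j)
    rw [occ_mem j, occ_grid j] at h
    exact h
  have hsum : ∀ f : Fin (d * n) → ℝ, ∑ t ∈ Fi, f t = ∑ j : Fin n, f (occ j) := by
    intro f
    rw [← Finset.sum_coe_sort Fi f]
    exact (Equiv.sum_comp e.toEquiv (fun x => f ↑x)).symm
  have convert_u : ∑ t ∈ Fi,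
      ((φ (fun k => a k (toIdx n (gridPt d n ω ((t : ℕ) + 1) k))) -
          φ (fun k => a k (toIdx n (gridPt d n ω (t : ℕ) k)))) /
        (a i (toIdx n (gridPt d n ω ((t : ℕ) + 1) i)) -
          a i (toIdx n (gridPt d n ω (t : ℕ) i)))) *
      (u (toIdx n (gridPt d n ω ((t : ℕ) + 1) i)) - u (toIdx n (gridPt d n ω (t : ℕ) i)))
      = ∑ j : Fin n,
      ((φ (fun k => a k (toIdx n (gridPt d n ω (((occ j : Fin (d * n)) : ℕ) + 1) k))) -
          φ (fun k => a k (toIdx n (gridPt d n ω ((occ j : Fin (d * n)) : ℕ) k)))) /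
        (a i (toIdx n (gridPt d n ω (((occ j : Fin (d * n)) : ℕ) + 1) i)) -
          a i (toIdx n (gridPt d n ω ((occ j : Fin (d * n)) : ℕ) i)))) *
      (u (toIdx n ((j : ℕ) + 1)) - u (toIdx n (j : ℕ))) := by
    rw [hsum]
    apply Finset.sum_congr rfl
    intro j _
    congr 1
    rw [occ_succ j, occ_grid j]
  have convert_v : ∑ t ∈ Fi,
      ((φ (fun k => a k (toIdx n (gridPt d n ω ((t : ℕ) + 1) k))) -
          φ (fun k => a k (toIdx n (gridPt d n ω (t : ℕ) k)))) /
        (a i (toIdx n (gridPt d n ω ((t : ℕ) + 1) i)) -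
          a i (toIdx n (gridPt d n ω (t : ℕ) i)))) *
      (v (toIdx n (gridPt d n ω ((t : ℕ) + 1) i)) - v (toIdx n (gridPt d n ω (t : ℕ) i)))
      = ∑ j : Fin n,
      ((φ (fun k => a k (toIdx n (gridPt d n ω (((occ j : Fin (d * n)) : ℕ) + 1) k))) -
          φ (fun k => a k (toIdx n (gridPt d n ω ((occ j : Fin (d * n)) : ℕ) k)))) /
        (a i (toIdx n (gridPt d n ω (((occ j : Fin (d * n)) : ℕ) + 1) i)) -
          a i (toIdx n (gridPt d n ω ((occ j : Fin (d * n)) : ℕ) i)))) *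
      (v (toIdx n ((j : ℕ) + 1)) - v (toIdx n (j : ℕ))) := by
    rw [hsum]
    apply Finset.sum_congr rfl
    intro j _
    congr 1
    rw [occ_succ j, occ_grid j]
  rw [convert_u, convert_v]
  apply aux_E2 n hn _ u v ?_ hu0 hlast hvu
  intro k hk
  exact aux_cmono d n a ha φ hsuper hconvarg ω i (occ ⟨k, by omega⟩) (occ ⟨k + 1, hk⟩) k hk
    (occ_mem _) (occ_mem _)
    (le_of_lt (Fin.lt_def.mp (occ_mono (by exact Fin.mk_lt_mk.mpr (Nat.lt_succ_self k)))))
    (occ_grid ⟨k, by omega⟩) (occ_grid ⟨k + 1, hk⟩)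

lemma aux_Bhat_decomp (d n : ℕ) (φ : (Fin d → ℝ) → ℝ) (ω : Fin (d * n) → Fin d)
    (a st : Fin d → Fin (n + 1) → ℝ) :
    Bhat d n φ ω a st = φ (fun i => a i 0) + ∑ i, Lsum d n φ ω i a (st i) := by
  unfold Bhat Lsum
  congr 1
  · congr 1
    funext i
    rw [gridPt_zero, toIdx_zero]
  · rw [← Finset.sum_fiberwise Finset.univ ω (fun t =>
      ((φ (fun i => a i (toIdx n (gridPt d n ω ((t : ℕ) + 1) i))) -
          φ (fun i => a i (toIdx n (gridPt d n ω (t : ℕ) i)))) /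
          (a (ω t) (toIdx n (gridPt d n ω ((t : ℕ) + 1) (ω t))) -
            a (ω t) (toIdx n (gridPt d n ω (t : ℕ) (ω t))))) *
        (st (ω t) (toIdx n (gridPt d n ω ((t : ℕ) + 1) (ω t))) -
          st (ω t) (toIdx n (gridPt d n ω (t : ℕ) (ω t)))))]
    apply Finset.sum_congr rfl
    intro i _
    apply Finset.sum_congr rfl
    intro t ht
    have hti : ω t = i := (Finset.mem_filter.mp ht).2
    subst hti
    rfl

lemma aux_Bhat_affine (d n : ℕ) (φ : (Fin d → ℝ) → ℝ) (ω : Fin (d * n) → Fin d)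
    (a : Fin d → Fin (n + 1) → ℝ) (st1 st2 : Fin d → Fin (n + 1) → ℝ)
    (lam mu : ℝ) (h : lam + mu = 1) :
    Bhat d n φ ω a (fun i j => lam * st1 i j + mu * st2 i j) =
      lam * Bhat d n φ ω a st1 + mu * Bhat d n φ ω a st2 := by
  unfold Bhat
  rw [mul_add, mul_add, add_add_add_comm, Finset.mul_sum, Finset.mul_sum,
    ← Finset.sum_add_distrib]
  congr 1
  · rw [← add_mul, h, one_mul]
  · apply Finset.sum_congr rfl
    intro t _
    simp only []
    ring

theorem statement_7
    (d n m : ℕ) (hd : 1 ≤ d) (hn : 1 ≤ n)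
    (a : Fin d → Fin (n + 1) → ℝ) (ha : ∀ i, StrictMono (a i))
    (φ : (Fin d → ℝ) → ℝ)
    (W : Set ((Fin m → ℝ) × (Fin d → ℝ))) (hW : Convex ℝ W)
    (s : (Fin m → ℝ) × (Fin d → ℝ) → Fin d → Fin (n + 1) → ℝ)
    (hsconv : ∀ i j, ConvexOn ℝ W (fun w => s w i j))
    (hsQ : ∀ w ∈ W, s w ∈ Qset d n a)
    (hsn : ∀ w ∈ W, ∀ i, s w i (Fin.last n) = w.2 i)
    (hsuper : ∀ y ∈ Set.Icc (fun i => a i 0) (fun i => a i (Fin.last n)),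
      ∀ z ∈ Set.Icc (fun i => a i 0) (fun i => a i (Fin.last n)),
        φ y + φ z ≤ φ (y ⊔ z) + φ (y ⊓ z))
    (hconvarg : ∀ i : Fin d, ∀ g ∈ Set.Icc (fun i' => a i' 0) (fun i' => a i' (Fin.last n)),
      ConvexOn ℝ (Set.Icc (a i 0) (a i (Fin.last n))) (fun t => φ (Function.update g i t)))
    (hext : ∀ s' ∈ Qset d n a,
      concEnv (Qset d n a) (phibar d n φ) s' = concEnv (vertQ d n a) (phibar d n φ) s')
    (hbdd : ∀ ω : Fin (d * n) → Fin d, IsDirVec d n ω → ∀ i, ∃ C : ℝ,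
      ∀ w ∈ W, BiM d n φ ω i (s w i) a ≤ C)
    (R Rp : Set (((Fin m → ℝ) × (Fin d → ℝ)) × ℝ))
    (hR : R = {p | p.1 ∈ W ∧ ∃ st : Fin d → Fin (n + 1) → ℝ,
      (∀ i j, s p.1 i j ≤ st i j) ∧
      p.2 ≤ sInf {r : ℝ | ∃ ω : Fin (d * n) → Fin d, IsDirVec d n ω ∧ r = Bhat d n φ ω a st}})
    (hRp : Rp = {p | p.1 ∈ W ∧
      p.2 ≤ sInf {r : ℝ | ∃ ω : Fin (d * n) → Fin d, IsDirVec d n ω ∧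
        r = φ (fun i => a i 0) +
          ∑ i : Fin d, concEnv W (fun w => BiM d n φ ω i (s w i) a) p.1}}) :
    Convex ℝ R ∧ Convex ℝ Rp ∧
      {p : ((Fin m → ℝ) × (Fin d → ℝ)) × ℝ | p.1 ∈ W ∧ p.2 ≤ φ p.1.2} ⊆ Rp ∧
      Rp ⊆ R := by
  subst hR hRp
  obtain ⟨ω₀, hω₀⟩ := aux_dirvec_exists d n hn
  have hSBbdd : ∀ st : Fin d → Fin (n + 1) → ℝ,
      BddBelow {r : ℝ | ∃ ω : Fin (d * n) → Fin d, IsDirVec d n ω ∧ r = Bhat d n φ ω a st} :=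
    fun st => (aux_omega_set_finite _ _).bddBelow
  have hSPbdd : ∀ x : (Fin m → ℝ) × (Fin d → ℝ),
      BddBelow {r : ℝ | ∃ ω : Fin (d * n) → Fin d, IsDirVec d n ω ∧
        r = φ (fun i => a i 0) +
          ∑ i : Fin d, concEnv W (fun w => BiM d n φ ω i (s w i) a) x} :=
    fun x => (aux_omega_set_finite _ _).bddBelow
  have hQf : ∀ w, w ∈ W → ∀ i, s w i 0 = a i 0 ∧ Monotone (s w i) ∧ ∀ j, s w i j ≤ a i j :=
    fun w hw i => aux_Q_facts d n a ha i (s w i) (hsQ w hw i)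
  refine ⟨?_, ?_, ?_, ?_⟩
  · -- Convex R
    rintro ⟨w1, μ1⟩ ⟨hw1, st1, hst1, hμ1⟩ ⟨w2, μ2⟩ ⟨hw2, st2, hst2, hμ2⟩ lam mu hlam hmu hsum
    refine ⟨hW hw1 hw2 hlam hmu hsum, fun i j => lam * st1 i j + mu * st2 i j, ?_, ?_⟩
    · intro i j
      have hcv := (hsconv i j).2 hw1 hw2 hlam hmu hsum
      simp only [smul_eq_mul] at hcv
      exact le_trans hcv (add_le_add (mul_le_mul_of_nonneg_left (hst1 i j) hlam)
        (mul_le_mul_of_nonneg_left (hst2 i j) hmu))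
    · apply le_csInf
      · exact ⟨_, ω₀, hω₀, rfl⟩
      rintro r ⟨ω, hωd, rfl⟩
      have h1 : μ1 ≤ Bhat d n φ ω a st1 := le_trans hμ1 (csInf_le (hSBbdd st1) ⟨ω, hωd, rfl⟩)
      have h2 : μ2 ≤ Bhat d n φ ω a st2 := le_trans hμ2 (csInf_le (hSBbdd st2) ⟨ω, hωd, rfl⟩)
      have haff := aux_Bhat_affine d n φ ω a st1 st2 lam mu hsum
      show lam • μ1 + mu • μ2 ≤ Bhat d n φ ω a (fun i j => lam * st1 i j + mu * st2 i j)
      rw [haff, smul_eq_mul, smul_eq_mul]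
      exact add_le_add (mul_le_mul_of_nonneg_left h1 hlam) (mul_le_mul_of_nonneg_left h2 hmu)
  · -- Convex Rp
    rintro ⟨w1, μ1⟩ ⟨hw1, hμ1⟩ ⟨w2, μ2⟩ ⟨hw2, hμ2⟩ lam mu hlam hmu hsum
    refine ⟨hW hw1 hw2 hlam hmu hsum, ?_⟩
    apply le_csInf
    · exact ⟨_, ω₀, hω₀, rfl⟩
    rintro r ⟨ω, hωd, rfl⟩
    have h1 : μ1 ≤ φ (fun i => a i 0) +
        ∑ i, concEnv W (fun w => BiM d n φ ω i (s w i) a) w1 :=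
      le_trans hμ1 (csInf_le (hSPbdd w1) ⟨ω, hωd, rfl⟩)
    have h2 : μ2 ≤ φ (fun i => a i 0) +
        ∑ i, concEnv W (fun w => BiM d n φ ω i (s w i) a) w2 :=
      le_trans hμ2 (csInf_le (hSPbdd w2) ⟨ω, hωd, rfl⟩)
    have hsup : ∀ i : Fin d,
        lam * concEnv W (fun w => BiM d n φ ω i (s w i) a) w1 +
          mu * concEnv W (fun w => BiM d n φ ω i (s w i) a) w2 ≤
          concEnv W (fun w => BiM d n φ ω i (s w i) a) (lam • w1 + mu • w2) := by
      intro i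
      obtain ⟨C, hC⟩ := hbdd ω hωd i
      exact concEnv_superadd W _ hC hw1 hw2 hlam hmu hsum
    have hsumi := Finset.sum_le_sum (fun i (_ : i ∈ Finset.univ) => hsup i)
    rw [Finset.sum_add_distrib, ← Finset.mul_sum, ← Finset.mul_sum] at hsumi
    have h4 : lam * φ (fun i => a i 0) + mu * φ (fun i => a i 0) = φ (fun i => a i 0) := by
      rw [← add_mul, hsum, one_mul]
    show lam • μ1 + mu • μ2 ≤ φ (fun i => a i 0) +
      ∑ i, concEnv W (fun w => BiM d n φ ω i (s w i) a) (lam • w1 + mu • w2)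
    rw [smul_eq_mul, smul_eq_mul]
    have e1 := mul_le_mul_of_nonneg_left h1 hlam
    have e2 := mul_le_mul_of_nonneg_left h2 hmu
    rw [mul_add] at e1 e2
    linarith [hsumi, h4, e1, e2]
  · -- hypograph ⊆ Rp
    rintro ⟨w, μ⟩ ⟨hw, hμ⟩
    refine ⟨hw, ?_⟩
    apply le_csInf
    · exact ⟨_, ω₀, hω₀, rfl⟩
    rintro r ⟨ω, hωd, rfl⟩
    have key := aux_pointwise d n a ha φ hsuper ω hωd (s w)
      (fun i => (hQf w hw i).1) (fun i => (hQf w hw i).2.1) (fun i => (hQf w hw i).2.2)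
    have hlasts : (fun i => s w i (Fin.last n)) = w.2 := funext (fun i => hsn w hw i)
    rw [hlasts] at key
    have henv : ∀ i : Fin d, BiM d n φ ω i (s w i) a ≤
        concEnv W (fun w' => BiM d n φ ω i (s w' i) a) w := by
      intro i
      obtain ⟨C, hC⟩ := hbdd ω hωd i
      exact self_le_concEnv W _ hC hw
    have hse := Finset.sum_le_sum (fun i (_ : i ∈ Finset.univ) => henv i)
    show μ ≤ _
    calc μ ≤ φ w.2 := hμ
    _ ≤ φ (fun i => a i 0) + ∑ i, BiM d n φ ω i (s w i) a := key
    _ ≤ φ (fun i => a i 0) + ∑ i, concEnv W (fun w' => BiM d n φ ω i (s w' i) a) w := by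
        linarith [hse]
  · -- Rp ⊆ R
    rintro ⟨w, μ⟩ ⟨hw, hμ⟩
    refine ⟨hw, s w, fun i j => le_refl _, ?_⟩
    apply le_csInf
    · exact ⟨_, ω₀, hω₀, rfl⟩
    rintro r ⟨ω, hωd, rfl⟩
    have h1 : μ ≤ φ (fun i => a i 0) +
        ∑ i, concEnv W (fun w' => BiM d n φ ω i (s w' i) a) w :=
      le_trans hμ (csInf_le (hSPbdd w) ⟨ω, hωd, rfl⟩)
    have h2 : ∀ i : Fin d, concEnv W (fun w' => BiM d n φ ω i (s w' i) a) w ≤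
        Lsum d n φ ω i a (s w i) := by
      intro i
      apply concEnv_le W _ hw
      rintro r' ⟨kk, lam, y, h0, h1s, hyS, hyx, rfl⟩
      have hQy : ∀ idx, s (y idx) i 0 = a i 0 ∧ Monotone (s (y idx) i) ∧
          ∀ j, s (y idx) i j ≤ a i j := fun idx => hQf (y idx) (hyS idx) i
      have hE1 : ∀ idx, BiM d n φ ω i (s (y idx) i) a ≤ Lsum d n φ ω i a (s (y idx) i) :=
        fun idx => aux_BiM_le' d n hn a ha φ hsuper hconvarg ω hωd i _ _
          (hQy idx).1 (hQy idx).2.1 (hQy idx).2.2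
          (hQy idx).1 (hQy idx).2.1 (hQy idx).2.2 (fun j => le_refl _) rfl
      have hsum1 : ∑ idx, lam idx * BiM d n φ ω i (s (y idx) i) a ≤
          ∑ idx, lam idx * Lsum d n φ ω i a (s (y idx) i) :=
        Finset.sum_le_sum (fun idx _ => mul_le_mul_of_nonneg_left (hE1 idx) (h0 idx))
      rw [aux_L_linear d n φ ω i a lam (fun idx => s (y idx) i)] at hsum1
      have huRepQ : (fun j => ∑ idx, lam idx * s (y idx) i j) ∈
          convexHull ℝ {w' | ∃ j, w' = vvec d n a i j} := by
        have he : (fun j => ∑ idx, lam idx * s (y idx) i j) = ∑ idx, lam idx • s (y idx) i := by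
          funext j
          rw [Finset.sum_apply]
          rfl
        rw [he]
        exact Convex.sum_mem (convex_convexHull ℝ _) (fun idx _ => h0 idx) h1s
          (fun idx _ => hsQ (y idx) (hyS idx) i)
      obtain ⟨huR0, huRm, huRa⟩ := aux_Q_facts d n a ha i _ huRepQ
      have hle : ∀ j, s w i j ≤ (fun j => ∑ idx, lam idx * s (y idx) i j) j := by
        intro j
        have hj := (hsconv i j).map_sum_le (fun idx _ => h0 idx) h1s (fun idx _ => hyS idx)
        rw [hyx] at hj
        simpa [smul_eq_mul] using hj
      have hlastEq : (fun j => ∑ idx, lam idx * s (y idx) i j) (Fin.last n) =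
          s w i (Fin.last n) := by
        have hsnd : (∑ idx, lam idx • y idx).2 i = ∑ idx, lam idx * (y idx).2 i := by
          rw [Prod.snd_sum, Finset.sum_apply]
          apply Finset.sum_congr rfl
          intros
          rfl
        show ∑ idx, lam idx * s (y idx) i (Fin.last n) = s w i (Fin.last n)
        calc ∑ idx, lam idx * s (y idx) i (Fin.last n)
            = ∑ idx, lam idx * (y idx).2 i :=
              Finset.sum_congr rfl (fun idx _ => by rw [hsn (y idx) (hyS idx) i])
        _ = (∑ idx, lam idx • y idx).2 i := hsnd.symm
        _ = w.2 i := by rw [hyx]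
        _ = s w i (Fin.last n) := (hsn w hw i).symm
      have hE2 : Lsum d n φ ω i a (fun j => ∑ idx, lam idx * s (y idx) i j) ≤
          Lsum d n φ ω i a (s w i) :=
        aux_L_mono d n hn a ha φ hsuper hconvarg ω hωd i _ _
          (by show (∑ idx, lam idx * s (y idx) i 0) = s w i 0; rw [huR0, (hQf w hw i).1])
          hle hlastEq
      exact le_trans hsum1 hE2
    have hsum2 := Finset.sum_le_sum (fun i (_ : i ∈ Finset.univ) => h2 i)
    have hdec := aux_Bhat_decomp d n φ ω a (s w)
    show μ ≤ Bhat d n φ ω a (s w)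
    rw [hdec]
    linarith [h1, hsum2]
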